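/- arXiv:1208.6092 — 2 statements merged into one kernel-verified Lean document; each statement's English description precedes it below -/
import Mathlib

section
/- With H = E_acc ⊕ E_rej ⊕ E_non, U unitary, T = P_non U, for any vectors φ, φ′: 2·|⟨φ, φ′⟩ − ⟨Tφ, Tφ′⟩| ≤ (‖φ‖² − ‖Tφ‖²) + (‖φ′‖² − ‖Tφ′‖²). -/
open scoped InnerProductSpace

noncomputable def projOn {H : Type*} [NormedAddCommGroup H] [InnerProductSpace ℂ H]
    (K : Submodule ℂ H) [K.HasOrthogonalProjection] : H →L[ℂ] H :=
  K.subtypeL.comp K.orthogonalProjectionOnto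

theorem stmt3 {H : Type*} [NormedAddCommGroup H] [InnerProductSpace ℂ H]
    [FiniteDimensional ℂ H]
    (Eacc Erej Enon : Submodule ℂ H)
    (har : Eacc ≤ Erejᗮ) (han : Eacc ≤ Enonᗮ) (hrn : Erej ≤ Enonᗮ)
    (hsum : Eacc ⊔ Erej ⊔ Enon = ⊤)
    (U : H ≃ₗᵢ[ℂ] H) (T : H → H) (hT : T = fun v => projOn Enon (U v))
    (φ φ' : H) :
    2 * ‖⟪φ, φ'⟫_ℂ - ⟪T φ, T φ'⟫_ℂ‖ ≤
      (‖φ‖ ^ 2 - ‖T φ‖ ^ 2) + (‖φ'‖ ^ 2 - ‖T φ'‖ ^ 2) := by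
  subst hT
  set ψ := U φ with hψ
  set ψ' := U φ' with hψ'
  set p : H := projOn Enon ψ with hp
  set p' : H := projOn Enon ψ' with hp'
  set w : H := ψ - p with hw
  set w' : H := ψ' - p' with hw'
  have hpmem : p ∈ Enon := (Enon.orthogonalProjectionOnto ψ).2
  have hpmem' : p' ∈ Enon := (Enon.orthogonalProjectionOnto ψ').2
  have hwmem : w ∈ Enonᗮ := Enon.sub_starProjection_mem_orthogonal ψ
  have hwmem' : w' ∈ Enonᗮ := Enon.sub_starProjection_mem_orthogonal ψ'
  have hpw' : ⟪p, w'⟫_ℂ = 0 := hwmem' p hpmem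
  have hwp' : ⟪w, p'⟫_ℂ = 0 := by
    rw [← inner_conj_symm, hwmem p' hpmem', map_zero]
  have hpw : ⟪p, w⟫_ℂ = 0 := hwmem p hpmem
  have hpw2 : ⟪p', w'⟫_ℂ = 0 := hwmem' p' hpmem'
  have hsplit : ⟪φ, φ'⟫_ℂ - ⟪p, p'⟫_ℂ = ⟪w, w'⟫_ℂ := by
    have hU : ⟪φ, φ'⟫_ℂ = ⟪ψ, ψ'⟫_ℂ := (U.inner_map_map φ φ').symm
    have : ψ = p + w := by simp [hw]
    have h2 : ψ' = p' + w' := by simp [hw']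
    rw [hU, this, h2]
    simp only [inner_add_left, inner_add_right, hpw', hwp']
    ring
  have hnorm : ‖φ‖ ^ 2 - ‖p‖ ^ 2 = ‖w‖ ^ 2 := by
    have hU : ‖φ‖ = ‖ψ‖ := (U.norm_map φ).symm
    have : ψ = p + w := by simp [hw]
    have hpyth : ‖ψ‖ ^ 2 = ‖p‖ ^ 2 + ‖w‖ ^ 2 := by
      rw [this]
      have := norm_add_sq_eq_norm_sq_add_norm_sq_of_inner_eq_zero p w hpw
      nlinarith [this]
    rw [hU, hpyth]; ring
  have hnorm' : ‖φ'‖ ^ 2 - ‖p'‖ ^ 2 = ‖w'‖ ^ 2 := by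
    have hU : ‖φ'‖ = ‖ψ'‖ := (U.norm_map φ').symm
    have : ψ' = p' + w' := by simp [hw']
    have hpyth : ‖ψ'‖ ^ 2 = ‖p'‖ ^ 2 + ‖w'‖ ^ 2 := by
      rw [this]
      have := norm_add_sq_eq_norm_sq_add_norm_sq_of_inner_eq_zero p' w' hpw2
      nlinarith [this]
    rw [hU, hpyth]; ring
  show 2 * ‖⟪φ, φ'⟫_ℂ - ⟪p, p'⟫_ℂ‖ ≤ (‖φ‖ ^ 2 - ‖p‖ ^ 2) + (‖φ'‖ ^ 2 - ‖p'‖ ^ 2)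
  rw [hsplit, hnorm, hnorm']
  have h1 : ‖⟪w, w'⟫_ℂ‖ ≤ ‖w‖ * ‖w'‖ := norm_inner_le_norm w w'
  nlinarith [sq_nonneg (‖w‖ - ‖w'‖), norm_nonneg (⟪w, w'⟫_ℂ)]
end

section
/- The language L = { 0^m 1^n : m, n ∈ ℕ } does not satisfy the following property: there exists an equivalence relation ≡ on Δ = { (x,n) : x ∈ {0,1}*, |x| ≤ n } with finitely many equivalence classes such that (a) for all x, y of equal length with |xσ| ≤ n and σ ∈ {0,1}: (xσ,n) ≡ (yσ,n) iff (x,n) ≡ (y,n), and (b) (x,n) ≡ (y,n) implies L(xz) = L(yz) for all z with |xz| = n. -/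
/-- The language L = { 0^m 1^n : m, n ∈ ℕ } over Σ = {0,1}, with 0 = `false`, 1 = `true`. -/
def Lzo (x : List Bool) : Prop :=
  ∃ m n : ℕ, x = List.replicate m false ++ List.replicate n true

lemma Lzo_mono (x : List Bool) (hx : Lzo x) (a b : ℕ) (hab : a < b) (hb : b < x.length)
    (ha : ∀ (h : a < x.length), x[a] = true) : x[b] = true := by
  obtain ⟨m, k, rfl⟩ := hx
  have hlen : (List.replicate m false ++ List.replicate k true).length = m + k := by simp
  have hb' : b < m + k := by omega
  have hA : a < m + k := by omega
  have ham : m ≤ a := by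
    by_contra h
    have := ha (by omega)
    rw [List.getElem_append_left (by simpa using (by omega : a < m))] at this
    simp at this
  rw [List.getElem_append_right (by simpa using (by omega : m ≤ b))]
  simp

lemma peel {E : (List Bool × ℕ) → (List Bool × ℕ) → Prop} {n : ℕ}
    (ha : ∀ (σ : Bool) (x y : List Bool), x.length = y.length →
      x.length + 1 ≤ n → (E (x ++ [σ], n) (y ++ [σ], n) ↔ E (x, n) (y, n))) :
    ∀ (s x y : List Bool), x.length = y.length → (x ++ s).length ≤ n →
      E (x ++ s, n) (y ++ s, n) → E (x, n) (y, n) := by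
  intro s
  induction s using List.reverseRecOn with
  | nil => intro x y _ _ h; simpa using h
  | append_singleton t σ ih =>
    intro x y hxy hlen h
    apply ih x y hxy (by simp at hlen ⊢; omega)
    have := (ha σ (x ++ t) (y ++ t) (by simp [hxy]) (by simp at hlen ⊢; omega))
    rw [← this]
    simpa [List.append_assoc] using h

theorem stmt18 :
    ¬ ∃ E : (List Bool × ℕ) → (List Bool × ℕ) → Prop,
      Equivalence E ∧
      -- finitely many equivalence classes on Δ = {(x,n) : |x| ≤ n}
      (∃ F : Finset (List Bool × ℕ), ∀ p : List Bool × ℕ,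
        p.1.length ≤ p.2 → ∃ q ∈ F, q.1.length ≤ q.2 ∧ E p q) ∧
      -- (a) reversibility condition
      (∀ (n : ℕ) (σ : Bool) (x y : List Bool), x.length = y.length →
        x.length + 1 ≤ n →
        (E (x ++ [σ], n) (y ++ [σ], n) ↔ E (x, n) (y, n))) ∧
      -- (b) equivalent prefixes have identical continuations of full length
      (∀ (n : ℕ) (x y : List Bool), x.length = y.length → x.length ≤ n →
        E (x, n) (y, n) →
        ∀ z : List Bool, (x ++ z).length = n → (Lzo (x ++ z) ↔ Lzo (y ++ z))) := by
  rintro ⟨E, hE, ⟨F, hF⟩, ha, hb⟩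
  set n := F.card + 1 with hn
  -- the words w i = 0^i 1^{n-1-i}, length n-1
  set w : Fin n → List Bool := fun i =>
    List.replicate i false ++ List.replicate (n - 1 - i) true with hw
  have hwlen : ∀ i : Fin n, (w i).length = n - 1 := by
    intro i; have := i.isLt; simp [hw]; omega
  have hΔ : ∀ i : Fin n, (w i).length ≤ n := by intro i; rw [hwlen]; omega
  obtain ⟨i, j, hij, hfij⟩ :
      ∃ i j : Fin n, i ≠ j ∧ (hF (w i, n) (hΔ i)).choose = (hF (w j, n) (hΔ j)).choose := by
    have := Finset.exists_ne_map_eq_of_card_lt_of_maps_to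
      (s := (Finset.univ : Finset (Fin n))) (t := F)
      (by simp [hn]) (fun i _ => (hF (w i, n) (hΔ i)).choose_spec.1)
    obtain ⟨i, _, j, _, hij, h⟩ := this
    exact ⟨i, j, hij, h⟩
  -- wlog i < j
  wlog hlt : (i : ℕ) < (j : ℕ) generalizing i j
  · exact this j i hij.symm hfij.symm (by have := Fin.val_ne_of_ne hij; omega)
  have hEij : E (w i, n) (w j, n) := by
    have h1 := (hF (w i, n) (hΔ i)).choose_spec.2.2
    have h2 := (hF (w j, n) (hΔ j)).choose_spec.2.2
    rw [hfij] at h1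
    exact hE.trans h1 (hE.symm h2)
  have hjn : (j : ℕ) ≤ n - 1 := by have := j.isLt; omega
  -- decompose
  set x : List Bool := List.replicate i false ++ List.replicate ((j : ℕ) - i) true with hx
  set y : List Bool := List.replicate (j : ℕ) false with hy
  set s : List Bool := List.replicate (n - 1 - j) true with hs
  have hwi : w i = x ++ s := by
    simp only [hw, hx, hs, List.append_assoc, ← List.replicate_add]
    congr 2
    omega
  have hwj : w j = y ++ s := by simp [hw, hy, hs]
  have hxl : x.length = (j : ℕ) := by simp [hx]; omega
  have hyl : y.length = (j : ℕ) := by simp [hy]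
  have hEP : E (x, n) (y, n) := by
    apply peel (ha n) s x y (by omega)
    · rw [← hwi]; rw [hwlen]; omega
    · rw [← hwi, ← hwj]; exact hEij
  set z : List Bool := false :: List.replicate (n - 1 - j) true with hz
  have hzlen : (x ++ z).length = n := by simp [hz, hxl]; omega
  have hiff := hb n x y (by omega) (by omega) hEP z hzlen
  have hLy : Lzo (y ++ z) := by
    refine ⟨(j : ℕ) + 1, n - 1 - j, ?_⟩
    simp [hy, hz, List.replicate_succ' (n := (j:ℕ))]
  have hLx : Lzo (x ++ z) := hiff.mpr hLy
  -- derive contradiction: (x++z)[i] = true, (x++z)[j] = false, i < j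
  have hilt : (i : ℕ) < (x ++ z).length := by omega
  have hjlt : (j : ℕ) < (x ++ z).length := by omega
  have hgi : ∀ (h : (i : ℕ) < (x ++ z).length), (x ++ z)[(i : ℕ)] = true := by
    intro h
    rw [List.getElem_append_left (by omega)]
    rw [List.getElem_of_eq hx, List.getElem_append_right (by simp)]
    simp
  have hgj := Lzo_mono (x ++ z) hLx i j hlt hjlt hgi
  rw [List.getElem_append_right (by omega)] at hgj
  simp [hz, hxl] at hgj
end
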